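/- arXiv:2006.00278 — 5 statements merged into one kernel-verified Lean document; each statement's English description precedes it below -/
import Mathlib

section
/- Let P and Q be probability measures on the same measurable space with densities p, q with respect to a dominating measure ν, and let X be a square-integrable random variable. Then (E_P[X] - E_Q[X])² · ((1/TV(P,Q)) - 1) / 2 ≤ Var_P(X) + Var_Q(X), where TV(P,Q) = (1/2)∫|p-q| dν is the total variation distance (with the left side interpreted as 0 when TV(P,Q)=0). -/
/-!
Because `p` and `q` both integrate to `1`, for every constant `c` the difference of means is
`E_P X - E_Q X = ∫ (p - q) (X - c) dν`. Cauchy–Schwarz with weight `|p - q|` bounds its square by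
`∫ |p - q| dν · ∫ |p - q| (X - c)² dν ≤ 2 TV(P,Q) · (E_P (X - c)² + E_Q (X - c)²)`, and when `c` is
the midpoint of the two means the last factor equals `Var_P X + Var_Q X + (E_P X - E_Q X)² / 2`.
Solving for the sum of the variances gives the inequality.
-/

open MeasureTheory ProbabilityTheory

section

variable {Ω : Type*} [MeasurableSpace Ω] {ν : Measure Ω} {p : Ω → ℝ}

lemma integral_withDensity_ofReal (hpm : Measurable p) (hp0 : ∀ ω, 0 ≤ p ω) (g : Ω → ℝ) :
    ∫ ω, g ω ∂ν.withDensity (fun ω => ENNReal.ofReal (p ω)) = ∫ ω, p ω * g ω ∂ν := by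
  rw [integral_withDensity_eq_integral_toReal_smul hpm.ennreal_ofReal
    (.of_forall fun _ => ENNReal.ofReal_lt_top)]
  simp only [ENNReal.toReal_ofReal (hp0 _), smul_eq_mul]

lemma integrable_withDensity_ofReal_iff (hpm : Measurable p) (hp0 : ∀ ω, 0 ≤ p ω)
    {g : Ω → ℝ} :
    Integrable g (ν.withDensity fun ω => ENNReal.ofReal (p ω)) ↔
      Integrable (fun ω => p ω * g ω) ν := by
  rw [integrable_withDensity_iff_integrable_smul' hpm.ennreal_ofReal
    (.of_forall fun _ => ENNReal.ofReal_lt_top)]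
  simp only [ENNReal.toReal_ofReal (hp0 _), smul_eq_mul]

lemma sq_integral_mul_le_integral_mul_integral_mul_sq {w f : Ω → ℝ} (hw0 : ∀ ω, 0 ≤ w ω)
    (hw : Integrable w ν) (hwf : Integrable (fun ω => w ω * f ω) ν)
    (hwf2 : Integrable (fun ω => w ω * f ω ^ 2) ν) :
    (∫ ω, w ω * f ω ∂ν) ^ 2 ≤ (∫ ω, w ω ∂ν) * ∫ ω, w ω * f ω ^ 2 ∂ν := by
  have hquad : ∀ x : ℝ, 0 ≤ (∫ ω, w ω ∂ν) * (x * x) + (-2 * ∫ ω, w ω * f ω ∂ν) * x +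
      ∫ ω, w ω * f ω ^ 2 ∂ν := by
    intro x
    have hexpand : ∫ ω, w ω * (f ω - x) ^ 2 ∂ν = (∫ ω, w ω ∂ν) * (x * x) +
        (-2 * ∫ ω, w ω * f ω ∂ν) * x + ∫ ω, w ω * f ω ^ 2 ∂ν := by
      rw [← integral_const_mul, ← integral_mul_const, ← integral_mul_const,
        ← integral_add (by fun_prop) (by fun_prop), ← integral_add (by fun_prop) hwf2]
      congr 1 with ω
      ring
    rw [← hexpand]
    exact integral_nonneg fun ω => mul_nonneg (hw0 ω) (sq_nonneg _)
  have := discrim_le_zero hquad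
  rw [discrim] at this
  linarith

lemma sq_integral_sub_integral_le_integral_abs_sub_mul {P Q : Measure Ω} {q : Ω → ℝ}
    (hpm : Measurable p) (hqm : Measurable q) (hp0 : ∀ ω, 0 ≤ p ω) (hq0 : ∀ ω, 0 ≤ q ω)
    (hP : P = ν.withDensity fun ω => ENNReal.ofReal (p ω))
    (hQ : Q = ν.withDensity fun ω => ENNReal.ofReal (q ω))
    [IsFiniteMeasure P] [IsFiniteMeasure Q] {Y : Ω → ℝ} (hYP : MemLp Y 2 P) (hYQ : MemLp Y 2 Q) :
    (∫ ω, Y ω ∂P - ∫ ω, Y ω ∂Q) ^ 2 ≤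
      (∫ ω, |p ω - q ω| ∂ν) * (∫ ω, Y ω ^ 2 ∂P + ∫ ω, Y ω ^ 2 ∂Q) := by
  subst hP hQ
  have hp : Integrable p ν := by
    simpa using (integrable_withDensity_ofReal_iff hpm hp0).1 (integrable_const (1 : ℝ))
  have hq : Integrable q ν := by
    simpa using (integrable_withDensity_ofReal_iff hqm hq0).1 (integrable_const (1 : ℝ))
  have hpY := (integrable_withDensity_ofReal_iff hpm hp0).1 (hYP.integrable one_le_two)
  have hqY := (integrable_withDensity_ofReal_iff hqm hq0).1 (hYQ.integrable one_le_two)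
  have hpY2 := (integrable_withDensity_ofReal_iff hpm hp0).1 hYP.integrable_sq
  have hqY2 := (integrable_withDensity_ofReal_iff hqm hq0).1 hYQ.integrable_sq
  have hpYabs := (integrable_withDensity_ofReal_iff hpm hp0).1 (hYP.integrable one_le_two).abs
  have hqYabs := (integrable_withDensity_ofReal_iff hqm hq0).1 (hYQ.integrable one_le_two).abs
  have hwY : Integrable (fun ω => |p ω - q ω| * |Y ω|) ν := by
    convert (hpYabs.sub hqYabs).abs using 2 with ω
    rw [Pi.sub_apply, ← sub_mul, abs_mul, abs_abs]
  have hwY2 : Integrable (fun ω => |p ω - q ω| * |Y ω| ^ 2) ν := by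
    convert (hpY2.sub hqY2).abs using 2 with ω
    rw [Pi.sub_apply, ← sub_mul, abs_mul, sq_abs, abs_of_nonneg (sq_nonneg (Y ω))]
  simp only [integral_withDensity_ofReal hpm hp0, integral_withDensity_ofReal hqm hq0]
  calc (∫ ω, p ω * Y ω ∂ν - ∫ ω, q ω * Y ω ∂ν) ^ 2
      = |∫ ω, (p ω - q ω) * Y ω ∂ν| ^ 2 := by
        rw [sq_abs, ← integral_sub hpY hqY]
        simp only [sub_mul]
    _ ≤ (∫ ω, |p ω - q ω| * |Y ω| ∂ν) ^ 2 := by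
        gcongr
        exact abs_integral_le_integral_abs.trans_eq (by simp only [abs_mul])
    _ ≤ (∫ ω, |p ω - q ω| ∂ν) * ∫ ω, |p ω - q ω| * |Y ω| ^ 2 ∂ν :=
        sq_integral_mul_le_integral_mul_integral_mul_sq (fun ω => abs_nonneg _)
          (hp.sub hq).abs hwY hwY2
    _ ≤ (∫ ω, |p ω - q ω| ∂ν) * (∫ ω, p ω * Y ω ^ 2 ∂ν + ∫ ω, q ω * Y ω ^ 2 ∂ν) := by
        rw [← integral_add hpY2 hqY2]
        refine mul_le_mul_of_nonneg_left (integral_mono hwY2 (hpY2.add hqY2) fun ω => ?_)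
          (integral_nonneg fun ω => abs_nonneg _)
        simp only [sq_abs, ← add_mul]
        exact mul_le_mul_of_nonneg_right
          (abs_sub_le_iff.2 ⟨by linarith [hq0 ω], by linarith [hp0 ω]⟩) (sq_nonneg _)

lemma integral_sub_const_sq [IsProbabilityMeasure ν] {X : Ω → ℝ} (hX : MemLp X 2 ν) (c : ℝ) :
    ∫ ω, (X ω - c) ^ 2 ∂ν = variance X ν + (∫ ω, X ω ∂ν - c) ^ 2 := by
  have hXc : MemLp (fun ω => X ω - c) 2 ν := hX.sub (memLp_const c)
  rw [← variance_sub_const hX.1 c, variance_eq_sub hXc,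
    integral_sub (hX.integrable one_le_two) (integrable_const c)]
  simp

end

lemma sq_mul_one_div_half_sub_one_div_two_le {Δ d V : ℝ} (hd : 0 < d)
    (h : Δ ^ 2 ≤ d * (V + Δ ^ 2 / 2)) : Δ ^ 2 * (1 / ((1 / 2 : ℝ) * d) - 1) / 2 ≤ V := by
  rw [show Δ ^ 2 * (1 / ((1 / 2 : ℝ) * d) - 1) / 2 = Δ ^ 2 / d - Δ ^ 2 / 2 by field_simp,
    sub_le_iff_le_add, div_le_iff₀ hd]
  linarith

/-- Change-of-expectation inequality via total variation:
`(E_P[X] - E_Q[X])² ((1/TV(P,Q)) - 1) / 2 ≤ Var_P(X) + Var_Q(X)`,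
with the left-hand side interpreted as `0` when `TV(P,Q) = 0`. -/
theorem stmt0 {Ω : Type*} [MeasurableSpace Ω] (ν P Q : Measure Ω)
    (p q : Ω → ℝ) (hpm : Measurable p) (hqm : Measurable q)
    (hp0 : ∀ ω, 0 ≤ p ω) (hq0 : ∀ ω, 0 ≤ q ω)
    (hP : P = ν.withDensity fun ω => ENNReal.ofReal (p ω))
    (hQ : Q = ν.withDensity fun ω => ENNReal.ofReal (q ω))
    [IsProbabilityMeasure P] [IsProbabilityMeasure Q]
    (X : Ω → ℝ) (hXP : MemLp X 2 P) (hXQ : MemLp X 2 Q) :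
    (if (1 / 2 : ℝ) * ∫ ω, |p ω - q ω| ∂ν = 0 then 0 else
      (∫ ω, X ω ∂P - ∫ ω, X ω ∂Q) ^ 2 *
        (1 / ((1 / 2 : ℝ) * ∫ ω, |p ω - q ω| ∂ν) - 1) / 2) ≤
      variance X P + variance X Q := by
  split_ifs with htv
  · exact add_nonneg (variance_nonneg X P) (variance_nonneg X Q)
  have hd : 0 < ∫ ω, |p ω - q ω| ∂ν :=
    (integral_nonneg fun ω => abs_nonneg _).lt_of_ne' (by simpa using htv)
  set c := (∫ ω, X ω ∂P + ∫ ω, X ω ∂Q) / 2 with hc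
  have h := sq_integral_sub_integral_le_integral_abs_sub_mul hpm hqm hp0 hq0 hP hQ
    (Y := fun ω => X ω - c) (hXP.sub (memLp_const c)) (hXQ.sub (memLp_const c))
  rw [integral_sub_const_sq hXP, integral_sub_const_sq hXQ,
    integral_sub (hXP.integrable one_le_two) (integrable_const c),
    integral_sub (hXQ.integrable one_le_two) (integrable_const c)] at h
  simp only [integral_const, probReal_univ, smul_eq_mul, one_mul] at h
  refine sq_mul_one_div_half_sub_one_div_two_le hd ?_
  rw [hc] at h
  linear_combination h
end

section
/- Let P and Q be probability measures with Hellinger distance H(P,Q) ∈ (0,1), and let X be a random variable with finite variance under both. Then (E_P[X]-E_Q[X])² · (1/H(P,Q) - H(P,Q))² / (4 - 2H²(P,Q)) ≤ Var_P(X) + Var_Q(X). -/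
/-!
In `L²(ν)` the functions `u = √p` and `v = √q` are unit vectors with `⟪u, v⟫ = 1 - H²`, and
`x = √p X`, `y = √q X` satisfy `⟪x, u⟫ = E_P X`, `‖x‖² - ⟪x, u⟫² = Var_P X` (likewise for `y`, `Q`)
and `⟪x, v⟫ = ⟪y, u⟫ = ∫ X √(pq) dν`. The Gram determinants of `(x, u, v)` and `(y, v, u)` are
nonnegative; adding the two inequalities and minimising over the common value `⟪x, v⟫` yields
`(E_P X - E_Q X)² (1 - H²)² ≤ 2 (1 - (1 - H²)²) (Var_P X + Var_Q X)`.
-/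

open MeasureTheory ProbabilityTheory
open scoped RealInnerProductSpace

section InnerProductSpace

variable {E : Type*} [NormedAddCommGroup E] [InnerProductSpace ℝ E] {u v : E}

theorem sq_inner_sub_mul_add_sq_inner_le (hu : ‖u‖ = 1) (hv : ‖v‖ = 1) (x : E) :
    ⟪x, u⟫ ^ 2 - 2 * ⟪u, v⟫ * ⟪x, u⟫ * ⟪x, v⟫ + ⟪x, v⟫ ^ 2 ≤ ‖x‖ ^ 2 * (1 - ⟪u, v⟫ ^ 2) := by
  have h := (Matrix.posSemidef_gram ℝ ![x, u, v]).det_nonneg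
  simp only [Matrix.det_fin_three, Matrix.gram_apply, Matrix.cons_val_zero, Matrix.cons_val_one,
    Matrix.cons_val, inner_self_eq_norm_sq_to_K, Real.ringHom_apply, hu, hv, one_pow, mul_one,
    sub_nonneg] at h
  rw [real_inner_comm x u, real_inner_comm x v, real_inner_comm u v] at h
  linear_combination h

theorem sq_inner_sub_inner_mul_sq_inner_le (hu : ‖u‖ = 1) (hv : ‖v‖ = 1) {x y : E}
    (hxy : ⟪x, v⟫ = ⟪y, u⟫) :
    (⟪x, u⟫ - ⟪y, v⟫) ^ 2 * ⟪u, v⟫ ^ 2 ≤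
      2 * (1 - ⟪u, v⟫ ^ 2) * ((‖x‖ ^ 2 - ⟪x, u⟫ ^ 2) + (‖y‖ ^ 2 - ⟪y, v⟫ ^ 2)) := by
  have hx := sq_inner_sub_mul_add_sq_inner_le hu hv x
  have hy := sq_inner_sub_mul_add_sq_inner_le hv hu y
  rw [real_inner_comm u v, ← hxy] at hy
  nlinarith [sq_nonneg (2 * ⟪x, v⟫ - ⟪u, v⟫ * (⟪x, u⟫ + ⟪y, v⟫))]

end InnerProductSpace

namespace MeasureTheory

variable {Ω : Type*} [MeasurableSpace Ω] {ν : Measure Ω}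

theorem L2.inner_toLp_eq_integral_mul {f g : Ω → ℝ} (hf : MemLp f 2 ν) (hg : MemLp g 2 ν) :
    ⟪hf.toLp f, hg.toLp g⟫ = ∫ ω, f ω * g ω ∂ν := by
  rw [L2.inner_def]
  refine integral_congr_ae ?_
  filter_upwards [hf.coeFn_toLp, hg.coeFn_toLp] with ω hfω hgω
  simp [hfω, hgω, mul_comm]

theorem L2.norm_toLp_sq_eq_integral_sq {f : Ω → ℝ} (hf : MemLp f 2 ν) :
    ‖hf.toLp f‖ ^ 2 = ∫ ω, f ω ^ 2 ∂ν := by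
  simp_rw [← real_inner_self_eq_norm_sq, inner_toLp_eq_integral_mul, sq]

theorem L2.half_integral_sub_sq_eq_one_sub_integral_mul {f g : Ω → ℝ} (hf : MemLp f 2 ν)
    (hg : MemLp g 2 ν) (hf1 : ‖hf.toLp f‖ = 1) (hg1 : ‖hg.toLp g‖ = 1) :
    1 / 2 * ∫ ω, (f ω - g ω) ^ 2 ∂ν = 1 - ∫ ω, f ω * g ω ∂ν := by
  rw [← inner_toLp_eq_integral_mul hf hg]
  have h := norm_toLp_sq_eq_integral_sq (hf.sub hg)
  rw [MemLp.toLp_sub hf hg, norm_sub_sq_real, hf1, hg1] at h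
  simp only [Pi.sub_apply] at h
  linarith

variable {p : Ω → ℝ}

theorem integral_withDensity_ofReal (hpm : Measurable p) (hp0 : ∀ ω, 0 ≤ p ω) (g : Ω → ℝ) :
    ∫ ω, g ω ∂ν.withDensity (fun ω => ENNReal.ofReal (p ω)) = ∫ ω, p ω * g ω ∂ν := by
  rw [integral_withDensity_eq_integral_toReal_smul hpm.ennreal_ofReal
    (ae_of_all _ fun _ => ENNReal.ofReal_lt_top)]
  simp [ENNReal.toReal_ofReal (hp0 _)]

theorem memLp_two_sqrt_mul_of_withDensity (hpm : Measurable p) (hp0 : ∀ ω, 0 ≤ p ω) {X : Ω → ℝ}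
    (hX : MemLp X 2 (ν.withDensity fun ω => ENNReal.ofReal (p ω))) :
    MemLp (fun ω => √(p ω) * X ω) 2 ν := by
  have hpX : AEStronglyMeasurable (fun ω => p ω * X ω) ν := by
    have := (aestronglyMeasurable_withDensity_iff hpm.real_toNNReal).1 hX.1
    simpa [Real.coe_toNNReal _ (hp0 _)] using this
  -- `√p X = (√p)⁻¹ (p X)` everywhere, also where `p = 0`, since `p / √p = √p` for all `p`
  have hmeas : AEStronglyMeasurable (fun ω => √(p ω) * X ω) ν := by
    refine (hpm.sqrt.inv.aestronglyMeasurable.mul hpX).congr (ae_of_all _ fun ω => ?_)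
    simp only [Pi.mul_apply, Pi.inv_apply, ← mul_assoc, inv_mul_eq_div, Real.div_sqrt]
  rw [memLp_two_iff_integrable_sq hmeas]
  have := (integrable_withDensity_iff_integrable_smul' hpm.ennreal_ofReal
    (ae_of_all _ fun _ => ENNReal.ofReal_lt_top)).1 hX.integrable_sq
  refine this.congr (ae_of_all _ fun ω => ?_)
  simp [mul_pow, Real.sq_sqrt (hp0 ω), ENNReal.toReal_ofReal (hp0 ω)]


theorem norm_toLp_sqrt_density (hpm : Measurable p) (hp0 : ∀ ω, 0 ≤ p ω)
    [IsProbabilityMeasure (ν.withDensity fun ω => ENNReal.ofReal (p ω))]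
    (hu : MemLp (fun ω => √(p ω)) 2 ν) : ‖hu.toLp _‖ = 1 := by
  have h := integral_withDensity_ofReal (ν := ν) hpm hp0 1
  simp only [integral_const, probReal_univ, Pi.one_apply, mul_one, smul_eq_mul] at h
  rw [← pow_eq_one_iff_of_nonneg (norm_nonneg _) two_ne_zero, L2.norm_toLp_sq_eq_integral_sq]
  simp_rw [Real.sq_sqrt (hp0 _)]
  exact h.symm

theorem inner_toLp_sqrt_mul_toLp_sqrt (hpm : Measurable p) (hp0 : ∀ ω, 0 ≤ p ω) {X : Ω → ℝ}
    (hx : MemLp (fun ω => √(p ω) * X ω) 2 ν)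
    (hu : MemLp (fun ω => √(p ω)) 2 ν) :
    ⟪hx.toLp _, hu.toLp _⟫ = ∫ ω, X ω ∂ν.withDensity fun ω => ENNReal.ofReal (p ω) := by
  rw [L2.inner_toLp_eq_integral_mul, integral_withDensity_ofReal hpm hp0]
  congr with ω
  linear_combination X ω * Real.mul_self_sqrt (hp0 ω)

theorem norm_toLp_sqrt_mul_sq (hpm : Measurable p) (hp0 : ∀ ω, 0 ≤ p ω) {X : Ω → ℝ}
    (hx : MemLp (fun ω => √(p ω) * X ω) 2 ν) :
    ‖hx.toLp _‖ ^ 2 = ∫ ω, X ω ^ 2 ∂ν.withDensity fun ω => ENNReal.ofReal (p ω) := by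
  rw [L2.norm_toLp_sq_eq_integral_sq, integral_withDensity_ofReal hpm hp0]
  simp_rw [mul_pow, Real.sq_sqrt (hp0 _)]

end MeasureTheory

theorem mul_sq_one_div_sqrt_sub_sqrt_div_le {d ρ V : ℝ} (h0 : 0 < √(1 - ρ)) (h1 : √(1 - ρ) < 1)
    (h : d * ρ ^ 2 ≤ 2 * (1 - ρ ^ 2) * V) :
    d * (1 / √(1 - ρ) - √(1 - ρ)) ^ 2 / (4 - 2 * (1 - ρ)) ≤ V := by
  have hρ1 : 0 < 1 - ρ := Real.sqrt_pos.1 h0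
  have hρ0 : 0 < ρ := by linarith [(Real.sqrt_lt' one_pos).1 h1]
  have hsq : (1 / √(1 - ρ) - √(1 - ρ)) ^ 2 = ρ ^ 2 / (1 - ρ) := by
    have ht := Real.sq_sqrt hρ1.le
    field_simp
    rw [ht]
    ring
  rw [hsq, div_le_iff₀ (by linarith), ← mul_div_assoc, div_le_iff₀ hρ1]
  nlinarith

theorem stmt3_general {Ω : Type*} [MeasurableSpace Ω] (ν P Q : Measure Ω)
    (p q : Ω → ℝ) (hpm : Measurable p) (hqm : Measurable q)
    (hp0 : ∀ ω, 0 ≤ p ω) (hq0 : ∀ ω, 0 ≤ q ω)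
    (hP : P = ν.withDensity fun ω => ENNReal.ofReal (p ω))
    (hQ : Q = ν.withDensity fun ω => ENNReal.ofReal (q ω))
    [IsProbabilityMeasure P] [IsProbabilityMeasure Q]
    (hH0 : 0 < Real.sqrt ((1 / 2) * ∫ ω, (Real.sqrt (p ω) - Real.sqrt (q ω)) ^ 2 ∂ν))
    (hH1 : Real.sqrt ((1 / 2) * ∫ ω, (Real.sqrt (p ω) - Real.sqrt (q ω)) ^ 2 ∂ν) < 1)
    (X : Ω → ℝ) (hXP : MemLp X 2 P) (hXQ : MemLp X 2 Q) :
    (∫ ω, X ω ∂P - ∫ ω, X ω ∂Q) ^ 2 *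
        (1 / Real.sqrt ((1 / 2) * ∫ ω, (Real.sqrt (p ω) - Real.sqrt (q ω)) ^ 2 ∂ν) -
          Real.sqrt ((1 / 2) * ∫ ω, (Real.sqrt (p ω) - Real.sqrt (q ω)) ^ 2 ∂ν)) ^ 2 /
        (4 - 2 * ((1 / 2) * ∫ ω, (Real.sqrt (p ω) - Real.sqrt (q ω)) ^ 2 ∂ν)) ≤
      variance X P + variance X Q := by
  subst hP hQ
  have hu : MemLp (fun ω => √(p ω)) 2 ν := by
    simpa using memLp_two_sqrt_mul_of_withDensity hpm hp0 (memLp_const (1 : ℝ))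
  have hv : MemLp (fun ω => √(q ω)) 2 ν := by
    simpa using memLp_two_sqrt_mul_of_withDensity hqm hq0 (memLp_const (1 : ℝ))
  have hx := memLp_two_sqrt_mul_of_withDensity hpm hp0 hXP
  have hy := memLp_two_sqrt_mul_of_withDensity hqm hq0 hXQ
  have hu1 := norm_toLp_sqrt_density hpm hp0 hu
  have hv1 := norm_toLp_sqrt_density hqm hq0 hv
  have hxy : ⟪hx.toLp _, hv.toLp _⟫ = ⟪hy.toLp _, hu.toLp _⟫ := by
    simp_rw [L2.inner_toLp_eq_integral_mul]
    congr with ω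
    ring
  have key := sq_inner_sub_inner_mul_sq_inner_le hu1 hv1 hxy
  rw [inner_toLp_sqrt_mul_toLp_sqrt hpm hp0, inner_toLp_sqrt_mul_toLp_sqrt hqm hq0,
    norm_toLp_sqrt_mul_sq hpm hp0, norm_toLp_sqrt_mul_sq hqm hq0,
    L2.inner_toLp_eq_integral_mul] at key
  rw [L2.half_integral_sub_sq_eq_one_sub_integral_mul hu hv hu1 hv1] at hH0 hH1 ⊢
  rw [variance_eq_sub hXP, variance_eq_sub hXQ]
  exact mul_sq_one_div_sqrt_sub_sqrt_div_le hH0 hH1 (by simpa using key)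

/-- Change-of-expectation inequality via the Hellinger distance:
if `H(P,Q) ∈ (0,1)` where `H²(P,Q) = (1/2)∫(√p - √q)² dν`, then
`(E_P[X]-E_Q[X])² (1/H - H)² / (4 - 2H²) ≤ Var_P(X) + Var_Q(X)`. -/
theorem stmt3 {Ω : Type*} [MeasurableSpace Ω] (ν P Q : Measure Ω)
    (p q : Ω → ℝ) (hpm : Measurable p) (hqm : Measurable q)
    (hp0 : ∀ ω, 0 ≤ p ω) (hq0 : ∀ ω, 0 ≤ q ω)
    (hpint : Integrable p ν) (hqint : Integrable q ν)
    (hP : P = ν.withDensity fun ω => ENNReal.ofReal (p ω))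
    (hQ : Q = ν.withDensity fun ω => ENNReal.ofReal (q ω))
    [IsProbabilityMeasure P] [IsProbabilityMeasure Q]
    (hH0 : 0 < Real.sqrt ((1 / 2) * ∫ ω, (Real.sqrt (p ω) - Real.sqrt (q ω)) ^ 2 ∂ν))
    (hH1 : Real.sqrt ((1 / 2) * ∫ ω, (Real.sqrt (p ω) - Real.sqrt (q ω)) ^ 2 ∂ν) < 1)
    (X : Ω → ℝ) (hXP : MemLp X 2 P) (hXQ : MemLp X 2 Q) :
    (∫ ω, X ω ∂P - ∫ ω, X ω ∂Q) ^ 2 *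
        (1 / Real.sqrt ((1 / 2) * ∫ ω, (Real.sqrt (p ω) - Real.sqrt (q ω)) ^ 2 ∂ν) -
          Real.sqrt ((1 / 2) * ∫ ω, (Real.sqrt (p ω) - Real.sqrt (q ω)) ^ 2 ∂ν)) ^ 2 /
        (4 - 2 * ((1 / 2) * ∫ ω, (Real.sqrt (p ω) - Real.sqrt (q ω)) ^ 2 ∂ν)) ≤
      variance X P + variance X Q :=
  stmt3_general ν P Q p q hpm hqm hp0 hq0 hP hQ hH0 hH1 X hXP hXQ
end

section
/- Let P_0, P_1, …, P_M be probability measures with P_j ≪ P_0 for all j, let X be a random variable with finite variance under P_0, and let Δ be the vector with j-th entry E_{P_j}[X] - E_{P_0}[X]. Then Δᵀ χ²(P_0,…,P_M)⁺ Δ ≤ Var_{P_0}(X), where χ²(P_0,…,P_M) is the M×M matrix with (j,k)-entry ∫ (dP_j/dP_0) dP_k - 1 and A⁺ denotes the Moore–Penrose pseudoinverse. -/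
/-!
With `L j = dP_{j+1}/dP_0`, both sides are covariances under `P_0`: `χ²(P)_{jk} = cov[L j, L k]`
and `Δ_j = cov[X, L j]`. Expanding `0 ≤ Var[X - ∑ j, c j • L j]` gives
`2 cᵀΔ - cᵀ χ² c ≤ Var[X]` for every `c`, and for `c = χ²⁺ Δ` the left side is `Δᵀ χ²⁺ Δ`,
because the Moore–Penrose inverse of a symmetric matrix is symmetric.
-/

open MeasureTheory ProbabilityTheory Matrix

/-- The `M × M` chi-square divergence matrix of `P 0, P 1, …, P M`, with `(j,k)` entry
`∫ (dP_j/dP_0) dP_k - 1`. -/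
noncomputable def chiSqMatrix {Ω : Type*} [MeasurableSpace Ω] {M : ℕ}
    (P : Fin (M + 1) → Measure Ω) : Matrix (Fin M) (Fin M) ℝ :=
  Matrix.of fun j k => (∫ ω, ((P j.succ).rnDeriv (P 0) ω).toReal ∂(P k.succ)) - 1

namespace Matrix

variable {n R : Type*} [Fintype n] [CommSemiring R]

structure IsPenroseInverse (A B : Matrix n n R) : Prop where
  mul_inv_mul : A * B * A = A
  inv_mul_inv : B * A * B = B
  transpose_mul_inv : (A * B)ᵀ = A * B
  transpose_inv_mul : (B * A)ᵀ = B * A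

theorem IsPenroseInverse.transpose_eq_self {A B : Matrix n n R} (hA : Aᵀ = A)
    (h : IsPenroseInverse A B) : Bᵀ = B := by
  obtain ⟨h1, h2, h3, h4⟩ := h
  have h3' : Bᵀ * A = A * B := by rwa [transpose_mul, hA] at h3
  have h4' : A * Bᵀ = B * A := by rwa [transpose_mul, hA] at h4
  have hc1 : A * Bᵀ * A = A := by
    simpa [transpose_mul, hA, Matrix.mul_assoc] using congrArg transpose h1
  have hc2 : Bᵀ * A * Bᵀ = Bᵀ := by
    simpa [transpose_mul, hA, Matrix.mul_assoc] using congrArg transpose h2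
  have hcomm : A * B = B * A :=
    calc A * B = (A * Bᵀ) * (A * B) := by rw [← Matrix.mul_assoc, hc1]
      _ = (B * A) * (Bᵀ * A) := by rw [h4', h3']
      _ = B * (A * Bᵀ * A) := by simp only [Matrix.mul_assoc]
      _ = B * A := by rw [hc1]
  calc Bᵀ = Bᵀ * A * Bᵀ := hc2.symm
    _ = B * A * Bᵀ := by rw [h3', hcomm]
    _ = B * (A * B) := by rw [Matrix.mul_assoc, h4', hcomm]
    _ = B := by rw [← Matrix.mul_assoc, h2]

theorem IsPenroseInverse.dotProduct_mulVec_mulVec {A B : Matrix n n R} (hA : Aᵀ = A)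
    (h : IsPenroseInverse A B) (v : n → R) :
    (B *ᵥ v) ⬝ᵥ (A *ᵥ (B *ᵥ v)) = v ⬝ᵥ (B *ᵥ v) := by
  nth_rewrite 1 [← h.transpose_eq_self hA]
  rw [mulVec_transpose]
  simp only [dotProduct_mulVec, vecMul_vecMul, h.inv_mul_inv]

end Matrix

namespace ProbabilityTheory

variable {Ω ι : Type*} [MeasurableSpace Ω] {μ ν : Measure Ω} {X : Ω → ℝ}

noncomputable def covMatrix (g : ι → Ω → ℝ) (μ : Measure Ω) : Matrix ι ι ℝ :=
  Matrix.of fun i j => cov[g i, g j; μ]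

@[simp]
lemma covMatrix_apply (g : ι → Ω → ℝ) (μ : Measure Ω) (i j : ι) :
    covMatrix g μ i j = cov[g i, g j; μ] := rfl

lemma covMatrix_transpose (g : ι → Ω → ℝ) (μ : Measure Ω) :
    (covMatrix g μ)ᵀ = covMatrix g μ := by
  ext i j
  exact covariance_comm _ _

section Regression

variable [Fintype ι] [IsFiniteMeasure μ] {g : ι → Ω → ℝ}

/-- `Var[X - ∑ i, c i • g i] ≥ 0`, expanded. -/
lemma two_mul_dotProduct_covariance_sub_le_variance (hX : MemLp X 2 μ)
    (hg : ∀ i, MemLp (g i) 2 μ) (c : ι → ℝ) :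
    2 * (c ⬝ᵥ fun i => cov[X, g i; μ]) - c ⬝ᵥ (covMatrix g μ *ᵥ c) ≤ Var[X; μ] := by
  have hcg : ∀ i, MemLp (c i • g i) 2 μ := fun i => (hg i).const_smul (c i)
  have hY : MemLp (∑ i, c i • g i) 2 μ := memLp_finsetSum' _ fun i _ => hcg i
  have hcov : cov[X, ∑ i, c i • g i; μ] = c ⬝ᵥ fun i => cov[X, g i; μ] := by
    simp [covariance_sum_right hcg hX, covariance_smul_right, dotProduct]
  have hvar : Var[∑ i, c i • g i; μ] = c ⬝ᵥ (covMatrix g μ *ᵥ c) := by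
    rw [← covariance_self hY.aemeasurable, covariance_sum_sum hcg hcg]
    simp only [covariance_smul_left, covariance_smul_right, dotProduct, mulVec, covMatrix_apply,
      Finset.mul_sum]
    exact Finset.sum_congr rfl fun i _ => Finset.sum_congr rfl fun j _ => by ring
  have := variance_nonneg (X - ∑ i, c i • g i) μ
  rw [variance_sub hX hY, hcov, hvar] at this
  linarith

lemma dotProduct_mulVec_le_variance (hX : MemLp X 2 μ) (hg : ∀ i, MemLp (g i) 2 μ)
    {B : Matrix ι ι ℝ} (hB : (covMatrix g μ).IsPenroseInverse B) :
    (fun i => cov[X, g i; μ]) ⬝ᵥ (B *ᵥ fun i => cov[X, g i; μ]) ≤ Var[X; μ] := by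
  have := two_mul_dotProduct_covariance_sub_le_variance hX hg (B *ᵥ fun i => cov[X, g i; μ])
  rw [hB.dotProduct_mulVec_mulVec (covMatrix_transpose g μ), dotProduct_comm] at this
  linarith

end Regression

section LikelihoodRatio

lemma memLp_two_toReal_rnDeriv [SigmaFinite μ] [SigmaFinite ν] (hνμ : ν ≪ μ)
    (h : Integrable (fun ω => (ν.rnDeriv μ ω).toReal) ν) :
    MemLp (fun ω => (ν.rnDeriv μ ω).toReal) 2 μ := by
  rw [memLp_two_iff_integrable_sq
    (Measure.measurable_rnDeriv ν μ).ennreal_toReal.aestronglyMeasurable]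
  simpa [sq] using (integrable_toReal_rnDeriv_mul_iff hνμ).2 h

variable [IsProbabilityMeasure μ] [IsProbabilityMeasure ν]

lemma covariance_toReal_rnDeriv (hνμ : ν ≪ μ) (hX : MemLp X 2 μ)
    (hL : MemLp (fun ω => (ν.rnDeriv μ ω).toReal) 2 μ) :
    cov[X, fun ω => (ν.rnDeriv μ ω).toReal; μ] = (∫ ω, X ω ∂ν) - ∫ ω, X ω ∂μ := by
  rw [covariance_eq_sub hX hL, Measure.integral_toReal_rnDeriv hνμ,
    ← integral_toReal_rnDeriv_mul hνμ]
  simp [mul_comm]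

end LikelihoodRatio

end ProbabilityTheory

theorem stmt4_general {Ω : Type*} [MeasurableSpace Ω] {M : ℕ}
    (P : Fin (M + 1) → Measure Ω) [∀ j, IsProbabilityMeasure (P j)]
    (hAC : ∀ j : Fin M, P j.succ ≪ P 0)
    (hInt : ∀ j k : Fin M,
      Integrable (fun ω => ((P j.succ).rnDeriv (P 0) ω).toReal) (P k.succ))
    (X : Ω → ℝ) (hX0 : MemLp X 2 (P 0))
    (Aplus : Matrix (Fin M) (Fin M) ℝ)
    (h1 : chiSqMatrix P * Aplus * chiSqMatrix P = chiSqMatrix P)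
    (h2 : Aplus * chiSqMatrix P * Aplus = Aplus)
    (h3 : (chiSqMatrix P * Aplus)ᵀ = chiSqMatrix P * Aplus)
    (h4 : (Aplus * chiSqMatrix P)ᵀ = Aplus * chiSqMatrix P) :
    (fun j : Fin M => (∫ ω, X ω ∂(P j.succ)) - ∫ ω, X ω ∂(P 0)) ⬝ᵥ
        (Aplus *ᵥ fun j : Fin M => (∫ ω, X ω ∂(P j.succ)) - ∫ ω, X ω ∂(P 0)) ≤
      variance X (P 0) := by
  set L : Fin M → Ω → ℝ := fun j ω => ((P j.succ).rnDeriv (P 0) ω).toReal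
  have hL : ∀ j, MemLp (L j) 2 (P 0) := fun j => memLp_two_toReal_rnDeriv (hAC j) (hInt j j)
  have hΔ : (fun j : Fin M => (∫ ω, X ω ∂(P j.succ)) - ∫ ω, X ω ∂(P 0)) =
      fun j => cov[X, L j; P 0] :=
    funext fun j => (covariance_toReal_rnDeriv (hAC j) hX0 (hL j)).symm
  have hχ : chiSqMatrix P = covMatrix L (P 0) := by
    ext j k
    rw [covMatrix_apply, covariance_toReal_rnDeriv (hAC k) (hL j) (hL k),
      Measure.integral_toReal_rnDeriv (hAC j)]
    simp [chiSqMatrix, L]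
  rw [hχ] at h1 h2 h3 h4
  rw [hΔ]
  exact dotProduct_mulVec_le_variance hX0 hL ⟨h1, h2, h3, h4⟩

/-- Multiple-measure chi-square lower bound: for probability measures `P_0, …, P_M` with
`P_j ≪ P_0`, and `Δ_j = E_{P_j}[X] - E_{P_0}[X]`, any Moore–Penrose pseudoinverse `Aplus`
of the chi-square divergence matrix satisfies `Δᵀ Aplus Δ ≤ Var_{P_0}(X)`. -/
theorem stmt4 {Ω : Type*} [MeasurableSpace Ω] {M : ℕ}
    (P : Fin (M + 1) → Measure Ω) [∀ j, IsProbabilityMeasure (P j)]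
    (hAC : ∀ j : Fin M, P j.succ ≪ P 0)
    (hInt : ∀ j k : Fin M,
      Integrable (fun ω => ((P j.succ).rnDeriv (P 0) ω).toReal) (P k.succ))
    (X : Ω → ℝ) (hX0 : MemLp X 2 (P 0)) (hXint : ∀ j, Integrable X (P j))
    (Aplus : Matrix (Fin M) (Fin M) ℝ)
    (h1 : chiSqMatrix P * Aplus * chiSqMatrix P = chiSqMatrix P)
    (h2 : Aplus * chiSqMatrix P * Aplus = Aplus)
    (h3 : (chiSqMatrix P * Aplus)ᵀ = chiSqMatrix P * Aplus)
    (h4 : (Aplus * chiSqMatrix P)ᵀ = Aplus * chiSqMatrix P) :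
    (fun j : Fin M => (∫ ω, X ω ∂(P j.succ)) - ∫ ω, X ω ∂(P 0)) ⬝ᵥ
        (Aplus *ᵥ fun j : Fin M => (∫ ω, X ω ∂(P j.succ)) - ∫ ω, X ω ∂(P 0)) ≤
      variance X (P 0) :=
  stmt4_general P hAC hInt X hX0 Aplus h1 h2 h3 h4
end

section
/- Let P_0,…,P_M be probability measures with densities p_0,…,p_M with respect to a dominating measure ν, such that all Hellinger affinities ∫√(p_j p_0) dν are positive. Then for every vector v ∈ ℝ^M, vᵀ ρ(P_0|P_1,…,P_M) v = ∫ (Σ_{j=1}^M v_j (√p_j / ∫√(p_j p_0)dν - √p_0))² dν ≥ 0; in particular the Hellinger affinity matrix ρ(P_0|P_1,…,P_M) is symmetric positive semi-definite. -/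
open MeasureTheory ProbabilityTheory Matrix

/-!
With `a_j = ∫ √(p_j p_0) dν` and `f_j = √p_j / a_j - √p_0`, expanding the product and using
`∫ √p_j √p_0 dν = a_j`, `∫ p_0 dν = 1` gives `∫ f_j f_k dν = ρ_{j,k}`. Since the `f_j` lie in
`L²(ν)`, `ρ` is their Gram matrix, whose quadratic form is `∫ (Σ_j v_j f_j)² dν ≥ 0`.
-/

section

variable {Ω ι : Type*} [MeasurableSpace Ω] [Fintype ι] {ν : Measure Ω} {f : ι → Ω → ℝ}

theorem dotProduct_mulVec_integral_mul (hf : ∀ i, MemLp (f i) 2 ν) (v : ι → ℝ) :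
    v ⬝ᵥ (of (fun j k => ∫ ω, f j ω * f k ω ∂ν) *ᵥ v) = ∫ ω, (∑ j, v j * f j ω) ^ 2 ∂ν := by
  have hint : ∀ j k, Integrable (fun ω => v j * v k * (f j ω * f k ω)) ν := fun j k =>
    ((hf j).integrable_mul (hf k)).const_mul _
  have hsq : ∀ ω, (∑ j, v j * f j ω) ^ 2 = ∑ j, ∑ k, v j * v k * (f j ω * f k ω) := fun ω => by
    rw [sq, Finset.sum_mul_sum]
    exact Finset.sum_congr rfl fun j _ => Finset.sum_congr rfl fun k _ => by ring
  simp only [hsq, dotProduct, mulVec, of_apply, Finset.mul_sum]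
  rw [integral_finsetSum _ fun j _ => integrable_finsetSum _ fun k _ => hint j k]
  refine Finset.sum_congr rfl fun j _ => ?_
  rw [integral_finsetSum _ fun k _ => hint j k]
  refine Finset.sum_congr rfl fun k _ => ?_
  rw [integral_const_mul]
  ring

theorem posSemidef_integral_mul (hf : ∀ i, MemLp (f i) 2 ν) :
    (of fun j k => ∫ ω, f j ω * f k ω ∂ν).PosSemidef := by
  refine .of_dotProduct_mulVec_nonneg ?_ fun v => ?_
  · exact isHermitian_iff_isSymm.2 <| IsSymm.ext fun j k => by simp only [of_apply, mul_comm]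
  · rw [star_trivial, dotProduct_mulVec_integral_mul hf]
    exact integral_nonneg fun ω => sq_nonneg _

theorem memLp_two_sqrt {p : Ω → ℝ} (hp : Integrable p ν) (hp0 : 0 ≤ p) :
    MemLp (fun ω => √(p ω)) 2 ν := by
  refine (memLp_two_iff_integrable_sq
    (Real.continuous_sqrt.comp_aestronglyMeasurable hp.aestronglyMeasurable)).2 ?_
  simpa only [Real.sq_sqrt (hp0 _)] using hp

theorem integral_eq_one_of_isProbabilityMeasure_withDensity {p : Ω → ℝ} (hp : Integrable p ν)
    (hp0 : 0 ≤ p) [IsProbabilityMeasure (ν.withDensity fun ω => ENNReal.ofReal (p ω))] :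
    ∫ ω, p ω ∂ν = 1 := by
  have h := measure_univ (μ := ν.withDensity fun ω => ENNReal.ofReal (p ω))
  rw [withDensity_apply _ MeasurableSet.univ, setLIntegral_univ,
    ← ofReal_integral_eq_lintegral_ofReal hp (.of_forall hp0)] at h
  exact (ENNReal.ofReal_eq_one).1 h

theorem integrable_sqrt_mul_sqrt {p q : Ω → ℝ} (hp : Integrable p ν) (hq : Integrable q ν)
    (hp0 : 0 ≤ p) (hq0 : 0 ≤ q) : Integrable (fun ω => √(p ω) * √(q ω)) ν :=
  (memLp_two_sqrt hp hp0).integrable_mul (memLp_two_sqrt hq hq0)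

theorem integral_sqrt_mul {p q : Ω → ℝ} (hp0 : 0 ≤ p) :
    ∫ ω, √(p ω * q ω) ∂ν = ∫ ω, √(p ω) * √(q ω) ∂ν :=
  integral_congr_ae (.of_forall fun ω => Real.sqrt_mul (hp0 ω) _)

theorem integral_sqrt_div_sub_mul_sqrt_div_sub {p₀ q r : Ω → ℝ} (hp₀ : Integrable p₀ ν)
    (hq : Integrable q ν) (hr : Integrable r ν) (hp₀0 : 0 ≤ p₀) (hq0 : 0 ≤ q) (hr0 : 0 ≤ r)
    (hp₀1 : ∫ ω, p₀ ω ∂ν = 1) (ha : ∫ ω, √(q ω * p₀ ω) ∂ν ≠ 0)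
    (hb : ∫ ω, √(r ω * p₀ ω) ∂ν ≠ 0) :
    ∫ ω, (√(q ω) / (∫ ω', √(q ω' * p₀ ω') ∂ν) - √(p₀ ω)) *
        (√(r ω) / (∫ ω', √(r ω' * p₀ ω') ∂ν) - √(p₀ ω)) ∂ν =
      (∫ ω, √(q ω * r ω) ∂ν) / ((∫ ω, √(q ω * p₀ ω) ∂ν) * ∫ ω, √(r ω * p₀ ω) ∂ν) - 1 := by
  set a := ∫ ω, √(q ω * p₀ ω) ∂ν
  set b := ∫ ω, √(r ω * p₀ ω) ∂ν
  have hqr := (integrable_sqrt_mul_sqrt hq hr hq0 hr0).const_mul (a * b)⁻¹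
  have hqz := (integrable_sqrt_mul_sqrt hq hp₀ hq0 hp₀0).const_mul a⁻¹
  have hrz := (integrable_sqrt_mul_sqrt hr hp₀ hr0 hp₀0).const_mul b⁻¹
  have hzz : ∫ ω, √(p₀ ω) * √(p₀ ω) ∂ν = 1 := by
    simpa only [Real.mul_self_sqrt (hp₀0 _)] using hp₀1
  have hexpand : ∀ ω, (√(q ω) / a - √(p₀ ω)) * (√(r ω) / b - √(p₀ ω)) =
      (a * b)⁻¹ * (√(q ω) * √(r ω)) - a⁻¹ * (√(q ω) * √(p₀ ω)) -
        b⁻¹ * (√(r ω) * √(p₀ ω)) + √(p₀ ω) * √(p₀ ω) := fun ω => by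
    field_simp
    ring
  simp only [hexpand]
  rw [integral_add ?_ (integrable_sqrt_mul_sqrt hp₀ hp₀ hp₀0 hp₀0), integral_sub ?_ hrz,
    integral_sub hqr hqz, integral_const_mul, integral_const_mul, integral_const_mul, hzz,
    ← integral_sqrt_mul hq0, ← integral_sqrt_mul hq0, ← integral_sqrt_mul hr0]
  · field_simp
    ring
  · exact hqr.sub hqz
  · exact (hqr.sub hqz).sub hrz

end

theorem stmt6_general {Ω : Type*} [MeasurableSpace Ω] {M : ℕ} (ν : Measure Ω)
    (P : Fin (M + 1) → Measure Ω) [∀ j, IsProbabilityMeasure (P j)]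
    (p : Fin (M + 1) → Ω → ℝ)
    (hp0 : ∀ j ω, 0 ≤ p j ω)
    (hpint : ∀ j, Integrable (p j) ν)
    (hP : ∀ j, P j = ν.withDensity fun ω => ENNReal.ofReal (p j ω))
    (haff : ∀ j, 0 < ∫ ω, Real.sqrt (p j ω * p 0 ω) ∂ν) :
    (∀ v : Fin M → ℝ,
      v ⬝ᵥ ((Matrix.of fun j k : Fin M =>
          (∫ ω, Real.sqrt (p j.succ ω * p k.succ ω) ∂ν) /
            ((∫ ω, Real.sqrt (p j.succ ω * p 0 ω) ∂ν) *
              ∫ ω, Real.sqrt (p k.succ ω * p 0 ω) ∂ν) - 1) *ᵥ v) =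
        ∫ ω, (∑ j : Fin M,
          v j * (Real.sqrt (p j.succ ω) / (∫ ω', Real.sqrt (p j.succ ω' * p 0 ω') ∂ν) -
            Real.sqrt (p 0 ω))) ^ 2 ∂ν) ∧
    (Matrix.of fun j k : Fin M =>
        (∫ ω, Real.sqrt (p j.succ ω * p k.succ ω) ∂ν) /
          ((∫ ω, Real.sqrt (p j.succ ω * p 0 ω) ∂ν) *
            ∫ ω, Real.sqrt (p k.succ ω * p 0 ω) ∂ν) - 1).IsSymm ∧
    (Matrix.of fun j k : Fin M =>
        (∫ ω, Real.sqrt (p j.succ ω * p k.succ ω) ∂ν) /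
          ((∫ ω, Real.sqrt (p j.succ ω * p 0 ω) ∂ν) *
            ∫ ω, Real.sqrt (p k.succ ω * p 0 ω) ∂ν) - 1).PosSemidef := by
  have hp₀1 : ∫ ω, p 0 ω ∂ν = 1 := by
    have : IsProbabilityMeasure (ν.withDensity fun ω => ENNReal.ofReal (p 0 ω)) :=
      hP 0 ▸ inferInstance
    exact integral_eq_one_of_isProbabilityMeasure_withDensity (hpint 0) (hp0 0)
  set f : Fin M → Ω → ℝ := fun j ω =>
    √(p j.succ ω) / (∫ ω', √(p j.succ ω' * p 0 ω') ∂ν) - √(p 0 ω)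
  have hf : ∀ j, MemLp (f j) 2 ν := fun j => by
    simp only [f, div_eq_mul_inv]
    exact ((memLp_two_sqrt (hpint _) (hp0 _)).mul_const _).sub (memLp_two_sqrt (hpint 0) (hp0 0))
  have hρ : (Matrix.of fun j k : Fin M =>
      (∫ ω, √(p j.succ ω * p k.succ ω) ∂ν) /
        ((∫ ω, √(p j.succ ω * p 0 ω) ∂ν) * ∫ ω, √(p k.succ ω * p 0 ω) ∂ν) - 1) =
      of fun j k => ∫ ω, f j ω * f k ω ∂ν := by
    ext j k
    exact (integral_sqrt_div_sub_mul_sqrt_div_sub (hpint 0) (hpint _) (hpint _) (hp0 0) (hp0 _)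
      (hp0 _) hp₀1 (haff _).ne' (haff _).ne').symm
  rw [hρ]
  exact ⟨dotProduct_mulVec_integral_mul hf,
    isHermitian_iff_isSymm.1 (posSemidef_integral_mul hf).isHermitian,
    posSemidef_integral_mul hf⟩

/-- Quadratic form identity for the Hellinger affinity matrix
`ρ(P_0|P_1,…,P_M)_{j,k} = ∫√(p_j p_k)dν / (∫√(p_j p_0)dν ∫√(p_k p_0)dν) - 1`:
`vᵀ ρ v = ∫ (Σ_j v_j (√p_j/∫√(p_j p_0)dν - √p_0))² dν ≥ 0`; in particular
the Hellinger affinity matrix is symmetric positive semi-definite. -/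
theorem stmt6 {Ω : Type*} [MeasurableSpace Ω] {M : ℕ} (ν : Measure Ω)
    (P : Fin (M + 1) → Measure Ω) [∀ j, IsProbabilityMeasure (P j)]
    (p : Fin (M + 1) → Ω → ℝ)
    (hpm : ∀ j, Measurable (p j)) (hp0 : ∀ j ω, 0 ≤ p j ω)
    (hpint : ∀ j, Integrable (p j) ν)
    (hP : ∀ j, P j = ν.withDensity fun ω => ENNReal.ofReal (p j ω))
    (haff : ∀ j, 0 < ∫ ω, Real.sqrt (p j ω * p 0 ω) ∂ν) :
    (∀ v : Fin M → ℝ,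
      v ⬝ᵥ ((Matrix.of fun j k : Fin M =>
          (∫ ω, Real.sqrt (p j.succ ω * p k.succ ω) ∂ν) /
            ((∫ ω, Real.sqrt (p j.succ ω * p 0 ω) ∂ν) *
              ∫ ω, Real.sqrt (p k.succ ω * p 0 ω) ∂ν) - 1) *ᵥ v) =
        ∫ ω, (∑ j : Fin M,
          v j * (Real.sqrt (p j.succ ω) / (∫ ω', Real.sqrt (p j.succ ω' * p 0 ω') ∂ν) -
            Real.sqrt (p 0 ω))) ^ 2 ∂ν) ∧
    (Matrix.of fun j k : Fin M =>
        (∫ ω, Real.sqrt (p j.succ ω * p k.succ ω) ∂ν) /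
          ((∫ ω, Real.sqrt (p j.succ ω * p 0 ω) ∂ν) *
            ∫ ω, Real.sqrt (p k.succ ω * p 0 ω) ∂ν) - 1).IsSymm ∧
    (Matrix.of fun j k : Fin M =>
        (∫ ω, Real.sqrt (p j.succ ω * p k.succ ω) ∂ν) /
          ((∫ ω, Real.sqrt (p j.succ ω * p 0 ω) ∂ν) *
            ∫ ω, Real.sqrt (p k.succ ω * p 0 ω) ∂ν) - 1).PosSemidef :=
  stmt6_general ν P p hp0 hpint hP haff
end

section
/- Let P, Q be probability measures with densities p, q relative to ν, and let X be an integrable random variable. Then for any real numbers u, v: (1/5)·(1 - H²(P,Q))²·|u - v| ≤ max(E_P[|X - u|], E_Q[|X - v|]). -/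
/-!
Write `A = ∫ √(p q) dν` for the Hellinger affinity, `M` for the right-hand side and `d = |u - v|`.
By the triangle inequality `d √(pq) ≤ √(pq) (|X - u| + |X - v|)`, and Cauchy–Schwarz bounds
`∫ √(pq) |X - w| dν` by `√(E_P|X - w| · E_Q|X - w|)`. Moving the centre between `u` and `v` changes
a mean absolute deviation by at most `d`, so each of the two products is at most `M (M + d)`, whence
`A d ≤ 2 √(M (M + d))`. Since `A ≤ 1`, squaring this forces `A² d ≤ 5 M`.
-/

open MeasureTheory

section Density

variable {Ω : Type*} [MeasurableSpace Ω] {ν P : Measure Ω} {p : Ω → ℝ}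

lemma integral_eq_integral_density_mul (hpm : Measurable p) (hp0 : ∀ ω, 0 ≤ p ω)
    (hP : P = ν.withDensity fun ω => ENNReal.ofReal (p ω)) (g : Ω → ℝ) :
    ∫ ω, g ω ∂P = ∫ ω, p ω * g ω ∂ν := by
  rw [hP, integral_withDensity_eq_integral_toReal_smul hpm.ennreal_ofReal
    (ae_of_all _ fun _ => ENNReal.ofReal_lt_top)]
  simp only [ENNReal.toReal_ofReal (hp0 _), smul_eq_mul]

lemma MeasureTheory.Integrable.density_mul (hpm : Measurable p) (hp0 : ∀ ω, 0 ≤ p ω)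
    (hP : P = ν.withDensity fun ω => ENNReal.ofReal (p ω)) {g : Ω → ℝ} (hg : Integrable g P) :
    Integrable (fun ω => p ω * g ω) ν := by
  rw [hP, integrable_withDensity_iff_integrable_smul' hpm.ennreal_ofReal
    (ae_of_all _ fun _ => ENNReal.ofReal_lt_top)] at hg
  simpa only [ENNReal.toReal_ofReal (hp0 _), smul_eq_mul] using hg

lemma integral_density_eq_one [IsProbabilityMeasure P] (hpm : Measurable p) (hp0 : ∀ ω, 0 ≤ p ω)
    (hP : P = ν.withDensity fun ω => ENNReal.ofReal (p ω)) :
    ∫ ω, p ω ∂ν = 1 := by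
  simpa using (integral_eq_integral_density_mul hpm hp0 hP fun _ => 1).symm

end Density

section CauchySchwarz

variable {Ω : Type*} [MeasurableSpace Ω] {ν : Measure Ω} {f g : Ω → ℝ}

lemma MeasureTheory.Integrable.sqrt_mul (hf : Integrable f ν) (hg : Integrable g ν)
    (hf0 : ∀ ω, 0 ≤ f ω) (hg0 : ∀ ω, 0 ≤ g ω) :
    Integrable (fun ω => √(f ω * g ω)) ν := by
  refine ((hf.add hg).div_const 2).mono
    (Real.continuous_sqrt.comp_aestronglyMeasurable (hf.1.mul hg.1)) (ae_of_all _ fun ω => ?_)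
  have hfg : 0 ≤ (f ω + g ω) / 2 := by linarith [hf0 ω, hg0 ω]
  rw [Pi.add_apply, Real.norm_of_nonneg (Real.sqrt_nonneg _), Real.norm_of_nonneg hfg]
  exact Real.sqrt_le_iff.mpr ⟨hfg, by nlinarith [sq_nonneg (f ω - g ω)]⟩

lemma integral_sqrt_mul_le (hf : Integrable f ν) (hg : Integrable g ν)
    (hf0 : ∀ ω, 0 ≤ f ω) (hg0 : ∀ ω, 0 ≤ g ω) :
    ∫ ω, √(f ω * g ω) ∂ν ≤ √(∫ ω, f ω ∂ν) * √(∫ ω, g ω ∂ν) := by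
  have hsq {h : Ω → ℝ} (hh : Integrable h ν) (hh0 : ∀ ω, 0 ≤ h ω) :
      MemLp (fun ω => √(h ω)) (ENNReal.ofReal 2) ν := by
    rw [ENNReal.ofReal_ofNat, memLp_two_iff_integrable_sq
      (Real.continuous_sqrt.comp_aestronglyMeasurable hh.1)]
    exact hh.congr (ae_of_all _ fun ω => (Real.sq_sqrt (hh0 ω)).symm)
  have key := integral_mul_le_Lp_mul_Lq_of_nonneg Real.HolderConjugate.two_two
    (ae_of_all _ fun ω => Real.sqrt_nonneg (f ω)) (ae_of_all _ fun ω => Real.sqrt_nonneg (g ω))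
    (hsq hf hf0) (hsq hg hg0)
  simpa only [← Real.sqrt_mul (hf0 _), Real.rpow_two, Real.sq_sqrt (hf0 _),
    Real.sq_sqrt (hg0 _), ← Real.sqrt_eq_rpow] using key

end CauchySchwarz

section Hellinger

variable {Ω : Type*} [MeasurableSpace Ω] {ν : Measure Ω} {p q : Ω → ℝ}

lemma one_sub_half_integral_sq_sqrt_sub_sqrt (hp0 : ∀ ω, 0 ≤ p ω) (hq0 : ∀ ω, 0 ≤ q ω)
    (hpint : Integrable p ν) (hqint : Integrable q ν)
    (hp1 : ∫ ω, p ω ∂ν = 1) (hq1 : ∫ ω, q ω ∂ν = 1) :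
    1 - 1 / 2 * ∫ ω, (√(p ω) - √(q ω)) ^ 2 ∂ν = ∫ ω, √(p ω * q ω) ∂ν := by
  have hexpand (ω : Ω) : (√(p ω) - √(q ω)) ^ 2 = p ω + q ω - 2 * √(p ω * q ω) := by
    rw [sub_sq, Real.sq_sqrt (hp0 ω), Real.sq_sqrt (hq0 ω), Real.sqrt_mul (hp0 ω)]
    ring
  have hpq : Integrable (fun ω => p ω + q ω) ν := hpint.add hqint
  rw [integral_congr_ae (ae_of_all _ hexpand),
    integral_sub hpq ((hpint.sqrt_mul hqint hp0 hq0).const_mul 2),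
    integral_add hpint hqint, integral_const_mul, hp1, hq1]
  ring

lemma integral_sqrt_mul_le_one (hp0 : ∀ ω, 0 ≤ p ω) (hq0 : ∀ ω, 0 ≤ q ω)
    (hpint : Integrable p ν) (hqint : Integrable q ν)
    (hp1 : ∫ ω, p ω ∂ν = 1) (hq1 : ∫ ω, q ω ∂ν = 1) :
    ∫ ω, √(p ω * q ω) ∂ν ≤ 1 := by
  simpa [hp1, hq1] using integral_sqrt_mul_le hpint hqint hp0 hq0

variable {h : Ω → ℝ}

lemma integral_sqrt_mul_mul_le (hp0 : ∀ ω, 0 ≤ p ω) (hq0 : ∀ ω, 0 ≤ q ω) (h0 : ∀ ω, 0 ≤ h ω)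
    (hph : Integrable (fun ω => p ω * h ω) ν) (hqh : Integrable (fun ω => q ω * h ω) ν) :
    Integrable (fun ω => √(p ω * q ω) * h ω) ν ∧
      ∫ ω, √(p ω * q ω) * h ω ∂ν ≤
        √(∫ ω, p ω * h ω ∂ν) * √(∫ ω, q ω * h ω ∂ν) := by
  have hph0 ω := mul_nonneg (hp0 ω) (h0 ω)
  have hqh0 ω := mul_nonneg (hq0 ω) (h0 ω)
  have hfactor (ω : Ω) : √(p ω * h ω * (q ω * h ω)) = √(p ω * q ω) * h ω := by
    rw [show p ω * h ω * (q ω * h ω) = p ω * q ω * h ω ^ 2 by ring,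
      Real.sqrt_mul (mul_nonneg (hp0 ω) (hq0 ω)), Real.sqrt_sq (h0 ω)]
  simp only [← hfactor]
  exact ⟨hph.sqrt_mul hqh hph0 hqh0, integral_sqrt_mul_le hph hqh hph0 hqh0⟩

end Hellinger

section AbsoluteDeviation

variable {Ω : Type*} [MeasurableSpace Ω] {X : Ω → ℝ}

lemma integral_abs_sub_le_integral_abs_sub_add {μ : Measure Ω} [IsProbabilityMeasure μ]
    (hX : Integrable X μ) (u v : ℝ) :
    ∫ ω, |X ω - u| ∂μ ≤ ∫ ω, |X ω - v| ∂μ + |u - v| := by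
  have hXv : Integrable (fun ω => |X ω - v|) μ := (hX.sub (integrable_const v)).abs
  calc ∫ ω, |X ω - u| ∂μ ≤ ∫ ω, (|X ω - v| + |u - v|) ∂μ :=
        integral_mono (hX.sub (integrable_const u)).abs (hXv.add (integrable_const _))
          fun ω => abs_sub_comm u v ▸ abs_sub_le (X ω) v u
    _ = ∫ ω, |X ω - v| ∂μ + |u - v| := by
        rw [integral_add hXv (integrable_const _), integral_const]
        simp

variable {ν : Measure Ω} {p q : Ω → ℝ}

lemma integral_sqrt_mul_mul_abs_sub_le_add (hp0 : ∀ ω, 0 ≤ p ω) (hq0 : ∀ ω, 0 ≤ q ω)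
    (hpint : Integrable p ν) (hqint : Integrable q ν) {u v : ℝ}
    (hu : Integrable (fun ω => √(p ω * q ω) * |X ω - u|) ν)
    (hv : Integrable (fun ω => √(p ω * q ω) * |X ω - v|) ν) :
    (∫ ω, √(p ω * q ω) ∂ν) * |u - v| ≤
      ∫ ω, √(p ω * q ω) * |X ω - u| ∂ν + ∫ ω, √(p ω * q ω) * |X ω - v| ∂ν := by
  rw [← integral_mul_const, ← integral_add hu hv]
  refine integral_mono ((hpint.sqrt_mul hqint hp0 hq0).mul_const _) (hu.add hv) fun ω => ?_
  rw [← mul_add]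
  refine mul_le_mul_of_nonneg_left ?_ (Real.sqrt_nonneg _)
  simpa only [abs_sub_comm u] using abs_sub_le u (X ω) v

variable {P Q : Measure Ω} [IsFiniteMeasure P] [IsFiniteMeasure Q]

lemma integral_sqrt_density_mul_mul_abs_sub_le (hpm : Measurable p) (hqm : Measurable q)
    (hp0 : ∀ ω, 0 ≤ p ω) (hq0 : ∀ ω, 0 ≤ q ω)
    (hP : P = ν.withDensity fun ω => ENNReal.ofReal (p ω))
    (hQ : Q = ν.withDensity fun ω => ENNReal.ofReal (q ω))
    (hXP : Integrable X P) (hXQ : Integrable X Q) (w : ℝ) :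
    Integrable (fun ω => √(p ω * q ω) * |X ω - w|) ν ∧
      ∫ ω, √(p ω * q ω) * |X ω - w| ∂ν ≤ √(∫ ω, |X ω - w| ∂P) * √(∫ ω, |X ω - w| ∂Q) := by
  simp only [integral_eq_integral_density_mul hpm hp0 hP,
    integral_eq_integral_density_mul hqm hq0 hQ]
  exact integral_sqrt_mul_mul_le hp0 hq0 (fun ω => abs_nonneg (X ω - w))
    ((hXP.sub (integrable_const w)).abs.density_mul hpm hp0 hP)
    ((hXQ.sub (integrable_const w)).abs.density_mul hqm hq0 hQ)

end AbsoluteDeviation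

lemma one_div_five_mul_sq_mul_le_of_mul_le_two_sqrt {A d M : ℝ} (hA0 : 0 ≤ A) (hA1 : A ≤ 1)
    (hd : 0 ≤ d) (hM : 0 ≤ M) (h : A * d ≤ 2 * √(M * (M + d))) :
    1 / 5 * A ^ 2 * d ≤ M := by
  have hsq : (A * d) ^ 2 ≤ 4 * (M * (M + d)) :=
    calc (A * d) ^ 2 ≤ (2 * √(M * (M + d))) ^ 2 := pow_le_pow_left₀ (by positivity) h 2
      _ = 4 * (M * (M + d)) := by rw [mul_pow, Real.sq_sqrt (by positivity)]; norm_num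
  -- Otherwise `A² d² ≤ 4 M² + 4 M d < (4/25 + 4/5) A² d²`.
  by_contra! hlt
  have hK : 0 ≤ A ^ 2 * d - 5 * M := by linarith
  have hA2 : A ^ 2 ≤ 1 := by nlinarith
  nlinarith [mul_nonneg hK hd, mul_nonneg hK hM, mul_nonneg (sq_nonneg A) hd,
    mul_nonneg (sub_nonneg.2 hA2) (mul_nonneg (sq_nonneg A) (mul_nonneg hd hd))]

/-- Mean-absolute-deviation change-of-expectation inequality: with
`H²(P,Q) = (1/2)∫(√p-√q)² dν`, for any reals `u`, `v`,
`(1/5)(1 - H²(P,Q))² |u - v| ≤ max(E_P[|X-u|], E_Q[|X-v|])`. -/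
theorem stmt14 {Ω : Type*} [MeasurableSpace Ω] (ν P Q : Measure Ω)
    (p q : Ω → ℝ) (hpm : Measurable p) (hqm : Measurable q)
    (hp0 : ∀ ω, 0 ≤ p ω) (hq0 : ∀ ω, 0 ≤ q ω)
    (hpint : Integrable p ν) (hqint : Integrable q ν)
    (hP : P = ν.withDensity fun ω => ENNReal.ofReal (p ω))
    (hQ : Q = ν.withDensity fun ω => ENNReal.ofReal (q ω))
    [IsProbabilityMeasure P] [IsProbabilityMeasure Q]
    (X : Ω → ℝ) (hXP : Integrable X P) (hXQ : Integrable X Q) (u v : ℝ) :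
    (1 / 5) * (1 - (1 / 2) * ∫ ω, (Real.sqrt (p ω) - Real.sqrt (q ω)) ^ 2 ∂ν) ^ 2 * |u - v| ≤
      max (∫ ω, |X ω - u| ∂P) (∫ ω, |X ω - v| ∂Q) := by
  have hp1 := integral_density_eq_one hpm hp0 hP
  have hq1 := integral_density_eq_one hqm hq0 hQ
  have hCS := integral_sqrt_density_mul_mul_abs_sub_le hpm hqm hp0 hq0 hP hQ hXP hXQ
  have hQu := integral_abs_sub_le_integral_abs_sub_add hXQ u v
  have hPv := integral_abs_sub_le_integral_abs_sub_add hXP v u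
  rw [abs_sub_comm v u] at hPv
  set M := max (∫ ω, |X ω - u| ∂P) (∫ ω, |X ω - v| ∂Q)
  have hM : 0 ≤ M := (integral_nonneg fun ω => abs_nonneg _).trans (le_max_left _ _)
  rw [one_sub_half_integral_sq_sqrt_sub_sqrt hp0 hq0 hpint hqint hp1 hq1]
  refine one_div_five_mul_sq_mul_le_of_mul_le_two_sqrt
    (integral_nonneg fun ω => Real.sqrt_nonneg _)
    (integral_sqrt_mul_le_one hp0 hq0 hpint hqint hp1 hq1) (abs_nonneg _) hM ?_
  calc (∫ ω, √(p ω * q ω) ∂ν) * |u - v|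
      ≤ ∫ ω, √(p ω * q ω) * |X ω - u| ∂ν + ∫ ω, √(p ω * q ω) * |X ω - v| ∂ν :=
        integral_sqrt_mul_mul_abs_sub_le_add hp0 hq0 hpint hqint (hCS u).1 (hCS v).1
    _ ≤ √(∫ ω, |X ω - u| ∂P) * √(∫ ω, |X ω - u| ∂Q)
          + √(∫ ω, |X ω - v| ∂P) * √(∫ ω, |X ω - v| ∂Q) := add_le_add (hCS u).2 (hCS v).2
    _ ≤ √M * √(M + |u - v|) + √(M + |u - v|) * √M := by
        have hPu : ∫ ω, |X ω - u| ∂P ≤ M := le_max_left _ _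
        have hQv : ∫ ω, |X ω - v| ∂Q ≤ M := le_max_right _ _
        gcongr <;> linarith
    _ = 2 * √(M * (M + |u - v|)) := by rw [Real.sqrt_mul hM]; ring
end
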